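/- Every inclusion-wise minimal strongly connected spanning subgraph of a strongly connected digraph on n vertices has at most 2n - 2 edges. -/

import Mathlib

/-!
An out-branching (every vertex reachable from a root `r`) and an in-branching (every vertex
reaching `r`) each have `n - 1` arcs, and both exist inside any strongly connected digraph: take
for every `v ≠ r` the last arc of a shortest path from `r` to `v`, resp. the first arc of a
shortest path from `v` to `r`. Their union is a strongly connected spanning subgraph with at most
`2n - 2` arcs, so a minimal strongly connected digraph is equal to it.
-/

/-- A digraph (given by its arc set) is strongly connected. -/
def StronglyConnected {V : Type*} (A : Set (V × V)) : Prop :=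
  ∀ u v : V, Relation.ReflTransGen (fun x y => (x, y) ∈ A) u v

section Branching

variable {V : Type*}

def ReachIn (R : V → V → Prop) : ℕ → V → V → Prop
  | 0, u, v => u = v
  | n + 1, u, v => ∃ w, ReachIn R n u w ∧ R w v

lemma exists_reachIn_of_reflTransGen {R : V → V → Prop} {u v : V}
    (h : Relation.ReflTransGen R u v) : ∃ n, ReachIn R n u v := by
  induction h with
  | refl => exact ⟨0, rfl⟩
  | tail _ hwv ih =>
    obtain ⟨n, hn⟩ := ih
    exact ⟨n + 1, _, hn, hwv⟩

lemma exists_height_of_reachable (R : V → V → Prop) (r : V)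
    (hreach : ∀ v, Relation.ReflTransGen R r v) :
    ∃ d : V → ℕ, ∀ v, v ≠ r → ∃ w, R w v ∧ d w < d v := by
  classical
  have hex (v : V) : ∃ n, ReachIn R n r v := exists_reachIn_of_reflTransGen (hreach v)
  refine ⟨fun v => Nat.find (hex v), fun v hv => ?_⟩
  have hspec := Nat.find_spec (hex v)
  obtain ⟨k, hk⟩ : ∃ k, Nat.find (hex v) = k + 1 := by
    refine Nat.exists_eq_succ_of_ne_zero fun h0 => hv ?_
    rw [h0] at hspec
    exact hspec.symm
  rw [hk] at hspec
  obtain ⟨w, hw, hwv⟩ := hspec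
  exact ⟨w, hwv, (Nat.find_min' (hex w) hw).trans_lt (by simp only [hk]; exact k.lt_succ_self)⟩

def parentArcs (p : V → V) (r : V) : Set (V × V) :=
  {e | e.2 ≠ r ∧ e.1 = p e.2}

lemma ncard_parentArcs_le [Finite V] (p : V → V) (r : V) :
    (parentArcs p r).ncard ≤ Nat.card V - 1 := by
  have himage : parentArcs p r = (fun v => (p v, v)) '' {r}ᶜ := by
    ext ⟨x, y⟩
    simp only [parentArcs, Set.mem_ofPred_eq, Set.mem_image, Set.mem_compl_singleton_iff,
      Prod.mk.injEq]
    constructor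
    · rintro ⟨hy, rfl⟩
      exact ⟨y, hy, rfl, rfl⟩
    · rintro ⟨v, hv, rfl, rfl⟩
      exact ⟨hv, rfl⟩
  calc (parentArcs p r).ncard ≤ ({r}ᶜ : Set V).ncard := by
        rw [himage]; exact Set.ncard_image_le (Set.toFinite _)
    _ = Nat.card V - 1 := by rw [Set.ncard_compl, Set.ncard_singleton]

lemma exists_parentArcs_subset (H : Set (V × V)) (r : V)
    (hreach : ∀ v, Relation.ReflTransGen (fun x y => (x, y) ∈ H) r v) :
    ∃ p : V → V, parentArcs p r ⊆ H ∧
      ∀ v, Relation.ReflTransGen (fun x y => (x, y) ∈ parentArcs p r) r v := by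
  classical
  obtain ⟨d, hd⟩ := exists_height_of_reachable _ r hreach
  choose! p hpH hpd using hd
  refine ⟨p, ?_, fun v => ?_⟩
  · rintro ⟨x, y⟩ ⟨hy, rfl : x = p y⟩
    exact hpH y hy
  induction hdv : d v using Nat.strong_induction_on generalizing v with
  | _ n ih =>
    by_cases hv : v = r
    · exact hv ▸ .refl
    · exact (ih _ (hdv ▸ hpd v hv) (p v) rfl).tail ⟨hv, rfl⟩

end Branching

lemma exists_stronglyConnected_subset_ncard_le {V : Type*} [Finite V] (H : Set (V × V))
    (hH : StronglyConnected H) :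
    ∃ K ⊆ H, StronglyConnected K ∧ K.ncard ≤ 2 * Nat.card V - 2 := by
  cases isEmpty_or_nonempty V
  · exact ⟨H, subset_rfl, hH, by simp [Set.eq_empty_of_isEmpty]⟩
  obtain ⟨r⟩ := ‹Nonempty V›
  obtain ⟨p, hpH, hp⟩ := exists_parentArcs_subset H r (hH r)
  obtain ⟨q, hqH, hq⟩ := exists_parentArcs_subset (Prod.swap ⁻¹' H) r
    fun v => Relation.reflTransGen_swap.2 (hH v r)
  have hinArcs : (Prod.swap ⁻¹' parentArcs q r).ncard ≤ Nat.card V - 1 := by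
    rw [← congrFun Set.image_swap_eq_preimage_swap,
      Set.ncard_image_of_injective _ Prod.swap_injective]
    exact ncard_parentArcs_le q r
  set inArcs := Prod.swap ⁻¹' parentArcs q r
  refine ⟨parentArcs p r ∪ inArcs, Set.union_subset hpH fun e he => hqH he, fun u v => ?_, ?_⟩
  · have hur : Relation.ReflTransGen (fun x y => (x, y) ∈ parentArcs p r ∪ inArcs) u r :=
      Relation.ReflTransGen.mono (fun _ _ h => Or.inr h) _ _ (Relation.reflTransGen_swap.1 (hq u))
    have hrv : Relation.ReflTransGen (fun x y => (x, y) ∈ parentArcs p r ∪ inArcs) r v :=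
      Relation.ReflTransGen.mono (fun _ _ h => Or.inl h) _ _ (hp v)
    exact hur.trans hrv
  · have := ncard_parentArcs_le p r
    have := Set.ncard_union_le (parentArcs p r) inArcs
    omega

theorem stmt3_general {V : Type*} [Fintype V] (H : Set (V × V))
    (hH : StronglyConnected H)
    (hmin : ∀ H' : Set (V × V), H' ⊂ H → ¬ StronglyConnected H') :
    H.ncard ≤ 2 * Fintype.card V - 2 := by
  obtain ⟨K, hKH, hK, hKcard⟩ := exists_stronglyConnected_subset_ncard_le H hH
  have hKeq : K = H := by
    by_contra hne
    exact hmin K (hKH.ssubset_of_ne hne) hK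
  rw [← hKeq, ← Nat.card_eq_fintype_card]
  exact hKcard

theorem stmt3 {V : Type*} [Fintype V] (A H : Set (V × V))
    (hA : StronglyConnected A) (hHA : H ⊆ A)
    (hH : StronglyConnected H)
    (hmin : ∀ H' : Set (V × V), H' ⊂ H → ¬ StronglyConnected H') :
    H.ncard ≤ 2 * Fintype.card V - 2 :=
  stmt3_general H hH hmin
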